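/- Let H be a Hilbert space continuously embedded in a Banach space B via a compact embedding ι, F ⊆ B nonempty closed with the Heine-Borel property and H ∩ F nonempty. Suppose Φ : B → ℝ is continuous and there exist constants K ∈ ℝ and α > 0 such that J(f) := Φ(f) + (1/2)‖f‖_H² satisfies J(f) ≥ K + α‖f‖_H² for all f ∈ H. Let λ_n → 0 with λ_n > 0 and let f_n ∈ H minimize J^{λ_n}(f) := J(f) + (1/(2λ_n²)) d_B(f, F)². Then {f_n} has an H-weakly convergent subsequence whose limit f* lies in H ∩ F, and f* minimizes J over H ∩ F. -/

import Mathlib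

/-!
Testing the relaxed objective against any `g` with `ι g ∈ F`, where the penalty vanishes, gives
`J f_n ≤ J g`; coercivity then bounds `f_n` in `H`, and `d_B(ι f_n, F)² ≤ 2 λ_n² (J g - K) → 0`.
A bounded sequence in a Hilbert space has a weakly convergent subsequence (sequential
Banach–Alaoglu on the separable closed span of the sequence), and the compact operator `ι` turns
weak convergence into norm convergence in `B`, so `ι f* ∈ F` because `F` is closed. Finally `Φ ∘ ι`
converges along the subsequence while `‖·‖²` is weakly lower semicontinuous, so `J f* ≤ J g`.
-/

open Filter Topology Metric
open scoped RealInnerProductSpace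

section WeakConvergence

variable {E : Type*} [NormedAddCommGroup E] [InnerProductSpace ℝ E]

theorem exists_subseq_tendsto_inner_of_separable [CompleteSpace E]
    [TopologicalSpace.SeparableSpace E] {x : ℕ → E} {R : ℝ} (hx : ∀ n, ‖x n‖ ≤ R) :
    ∃ (φ : ℕ → ℕ) (y : E), StrictMono φ ∧
      ∀ g, Tendsto (fun k => ⟪x (φ k), g⟫) atTop (𝓝 ⟪y, g⟫) := by
  let ψ : ℕ → WeakDual ℝ E := fun n => StrongDual.toWeakDual (innerSL ℝ (x n))
  have hψ : ∀ n, ψ n ∈ WeakDual.toStrongDual ⁻¹' closedBall 0 R := fun n => by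
    simpa [ψ] using hx n
  obtain ⟨ψ', -, φ, hφ, hlim⟩ := WeakDual.isSeqCompact_closedBall ℝ E 0 R hψ
  refine ⟨φ, (InnerProductSpace.toDual ℝ E).symm (WeakDual.toStrongDual ψ'), hφ, fun g => ?_⟩
  simpa [ψ, Function.comp_def] using ((WeakDual.eval_continuous g).tendsto ψ').comp hlim

theorem exists_subseq_tendsto_inner_of_bounded [CompleteSpace E] {x : ℕ → E} {R : ℝ}
    (hx : ∀ n, ‖x n‖ ≤ R) :
    ∃ (φ : ℕ → ℕ) (y : E), StrictMono φ ∧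
      ∀ g, Tendsto (fun k => ⟪x (φ k), g⟫) atTop (𝓝 ⟪y, g⟫) := by
  -- `⟪x n, g⟫` only sees the projection of `g` onto the closed span `V`, which is separable.
  set V := (Submodule.span ℝ (Set.range x)).topologicalClosure
  have hxV : ∀ n, x n ∈ V := fun n =>
    Submodule.le_topologicalClosure _ (Submodule.subset_span ⟨n, rfl⟩)
  have : CompleteSpace V := (Submodule.isClosed_topologicalClosure _).completeSpace_coe
  have : TopologicalSpace.SeparableSpace V := by
    refine TopologicalSpace.IsSeparable.separableSpace ?_
    rw [Submodule.topologicalClosure_coe]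
    exact (Set.countable_range x).isSeparable.span.closure
  obtain ⟨φ, y, hφ, hy⟩ :=
    exists_subseq_tendsto_inner_of_separable (x := fun n => (⟨x n, hxV n⟩ : V)) hx
  refine ⟨φ, y, hφ, fun g => ?_⟩
  simpa using hy (V.orthogonalProjectionOnto g)

theorem add_half_norm_sq_le_of_tendsto_inner {x : ℕ → E} {y : E} {a : ℕ → ℝ} {a₀ c : ℝ}
    (ha : Tendsto a atTop (𝓝 a₀))
    (hxy : Tendsto (fun n => ⟪x n, y⟫) atTop (𝓝 ⟪y, y⟫))
    (hle : ∀ n, a n + 1 / 2 * ‖x n‖ ^ 2 ≤ c) : a₀ + 1 / 2 * ‖y‖ ^ 2 ≤ c := by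
  have hlim : Tendsto (fun n => a n + (⟪x n, y⟫ - 1 / 2 * ‖y‖ ^ 2)) atTop
      (𝓝 (a₀ + 1 / 2 * ‖y‖ ^ 2)) := by
    convert ha.add (hxy.sub_const (1 / 2 * ‖y‖ ^ 2)) using 2
    rw [real_inner_self_eq_norm_sq]; ring
  refine le_of_tendsto' hlim fun n => ?_
  nlinarith [hle n, norm_sub_sq_real (x n) y, sq_nonneg ‖x n - y‖]

end WeakConvergence

theorem IsCompactOperator.tendsto_of_tendsto_inner {E B : Type*} [NormedAddCommGroup E]
    [InnerProductSpace ℝ E] [CompleteSpace E] [NormedAddCommGroup B] [NormedSpace ℝ B]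
    {T : E →L[ℝ] B} (hT : IsCompactOperator T) {x : ℕ → E} {y : E} {R : ℝ}
    (hx : ∀ n, ‖x n‖ ≤ R) (hxy : ∀ g, Tendsto (fun n => ⟪x n, g⟫) atTop (𝓝 ⟪y, g⟫)) :
    Tendsto (fun n => T (x n)) atTop (𝓝 (T y)) := by
  have hdual : ∀ ℓ : StrongDual ℝ B, Tendsto (fun n => ℓ (T (x n))) atTop (𝓝 (ℓ (T y))) := by
    intro ℓ
    have h := hxy ((InnerProductSpace.toDual ℝ E).symm (ℓ.comp T))
    simp only [real_inner_comm ((InnerProductSpace.toDual ℝ E).symm _),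
      InnerProductSpace.toDual_symm_apply] at h
    exact h
  -- Every subsequence has a norm-convergent subsequence, whose limit dual functionals identify.
  obtain ⟨K, hK, hTK⟩ := hT.image_closedBall_subset_compact R
  refine tendsto_of_subseq_tendsto fun ns hns => ?_
  obtain ⟨b, -, ms, hms, hb⟩ := hK.tendsto_subseq (x := fun k => T (x (ns k)))
    fun k => hTK ⟨x (ns k), by simpa using hx (ns k), rfl⟩
  obtain rfl : b = T y := SeparatingDual.eq_iff_forall_dual_eq.2 fun ℓ =>
    tendsto_nhds_unique ((ℓ.continuous.tendsto b).comp hb)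
      ((hdual ℓ).comp (hns.comp hms.tendsto_atTop))
  exact ⟨ms, hb⟩

theorem IsClosed.mem_of_tendsto_infDist {X α : Type*} [MetricSpace X] {s : Set X}
    (hs : IsClosed s) (hne : s.Nonempty) {l : Filter α} [l.NeBot] {x : α → X} {x₀ : X}
    (hx : Tendsto x l (𝓝 x₀)) (hd : Tendsto (fun n => infDist (x n) s) l (𝓝 0)) : x₀ ∈ s :=
  (hs.mem_iff_infDist_zero hne).2 <|
    tendsto_nhds_unique (((continuous_infDist_pt s).tendsto x₀).comp hx) hd

section RelaxedObjective

variable {H B : Type*} [PseudoMetricSpace B] {ι : H → B} {F : Set B} {J : H → ℝ}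

variable (ι F J) in
/-- The paper's `J^λ`. -/
noncomputable def relaxedObjective (lam : ℝ) (f : H) : ℝ :=
  J f + 1 / (2 * lam ^ 2) * infDist (ι f) F ^ 2

theorem relaxedObjective_of_mem {lam : ℝ} {g : H} (hg : ι g ∈ F) :
    relaxedObjective ι F J lam g = J g := by
  simp [relaxedObjective, infDist_zero_of_mem hg]

theorem le_relaxedObjective (lam : ℝ) (f : H) : J f ≤ relaxedObjective ι F J lam f :=
  le_add_of_nonneg_right (by positivity)

theorem le_of_relaxedObjective_le {lam : ℝ} {f g : H}
    (h : relaxedObjective ι F J lam f ≤ relaxedObjective ι F J lam g) (hg : ι g ∈ F) :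
    J f ≤ J g :=
  (le_relaxedObjective lam f).trans (h.trans_eq (relaxedObjective_of_mem hg))

theorem infDist_sq_le_of_relaxedObjective_le {lam K : ℝ} (hlam : lam ≠ 0) {f g : H}
    (hK : K ≤ J f) (h : relaxedObjective ι F J lam f ≤ relaxedObjective ι F J lam g)
    (hg : ι g ∈ F) : infDist (ι f) F ^ 2 ≤ 2 * lam ^ 2 * (J g - K) := by
  rw [relaxedObjective_of_mem hg, relaxedObjective] at h
  calc infDist (ι f) F ^ 2 = 2 * lam ^ 2 * (1 / (2 * lam ^ 2) * infDist (ι f) F ^ 2) := by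
        field_simp
    _ ≤ 2 * lam ^ 2 * (J g - K) := by gcongr; linarith

theorem tendsto_infDist_of_relaxedObjective_le {lam : ℕ → ℝ} (hlam : ∀ n, lam n ≠ 0)
    (hlam0 : Tendsto lam atTop (𝓝 0)) {K : ℝ} {f : ℕ → H} (hK : ∀ n, K ≤ J (f n)) {g : H}
    (hg : ι g ∈ F) (hmin : ∀ n, relaxedObjective ι F J (lam n) (f n) ≤
      relaxedObjective ι F J (lam n) g) :
    Tendsto (fun n => infDist (ι (f n)) F) atTop (𝓝 0) := by
  have hbound : Tendsto (fun n => √(2 * lam n ^ 2 * (J g - K))) atTop (𝓝 0) := by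
    simpa using (((hlam0.pow 2).const_mul 2).mul_const (J g - K)).sqrt
  refine squeeze_zero (fun n => infDist_nonneg) (fun n => ?_) hbound
  exact Real.le_sqrt_of_sq_le (infDist_sq_le_of_relaxedObjective_le (hlam n) (hK n) (hmin n) hg)

end RelaxedObjective

theorem norm_le_sqrt_of_le_of_coercive {E : Type*} [SeminormedAddCommGroup E] {J : E → ℝ}
    {K α : ℝ} (hα : 0 < α) (hcoercive : ∀ f, J f ≥ K + α * ‖f‖ ^ 2) {f g : E}
    (h : J f ≤ J g) : ‖f‖ ≤ √((J g - K) / α) :=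
  Real.le_sqrt_of_sq_le <| (le_div_iff₀ hα).2 <| by linarith [hcoercive f]

theorem relaxed_objective_minimizers_converge_general
    {H B : Type*} [NormedAddCommGroup H] [InnerProductSpace ℝ H] [CompleteSpace H]
    [NormedAddCommGroup B] [NormedSpace ℝ B]
    (ι : H →L[ℝ] B) (hιcpt : IsCompactOperator ι)
    (F : Set B) (hFclosed : IsClosed F)
    (hinter : ∃ f : H, ι f ∈ F)
    (Φ : B → ℝ) (hΦcont : Continuous Φ)
    (J : H → ℝ) (hJ : ∀ f : H, J f = Φ (ι f) + (1 / 2) * ‖f‖ ^ 2)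
    (K α : ℝ) (hα : 0 < α) (hcoercive : ∀ f : H, J f ≥ K + α * ‖f‖ ^ 2)
    (lam : ℕ → ℝ) (hlampos : ∀ n, 0 < lam n)
    (hlamto0 : Filter.Tendsto lam Filter.atTop (nhds 0))
    (fseq : ℕ → H)
    (hmin : ∀ n, ∀ g : H,
      J (fseq n) + (1 / (2 * lam n ^ 2)) * (Metric.infDist (ι (fseq n)) F) ^ 2 ≤
        J g + (1 / (2 * lam n ^ 2)) * (Metric.infDist (ι g) F) ^ 2) :
    ∃ (φ : ℕ → ℕ) (fstar : H), StrictMono φ ∧ ι fstar ∈ F ∧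
      (∀ g : H, Filter.Tendsto (fun k => (inner ℝ (fseq (φ k)) g : ℝ)) Filter.atTop
        (nhds (inner ℝ fstar g : ℝ))) ∧
      (∀ g : H, ι g ∈ F → J fstar ≤ J g) := by
  obtain ⟨g₀, hg₀⟩ := hinter
  have hJle : ∀ g, ι g ∈ F → ∀ n, J (fseq n) ≤ J g := fun g hg n =>
    le_of_relaxedObjective_le (hmin n g) hg
  have hbound : ∀ n, ‖fseq n‖ ≤ √((J g₀ - K) / α) := fun n =>
    norm_le_sqrt_of_le_of_coercive hα hcoercive (hJle g₀ hg₀ n)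
  have hdist : Tendsto (fun n => infDist (ι (fseq n)) F) atTop (𝓝 0) :=
    tendsto_infDist_of_relaxedObjective_le (fun n => (hlampos n).ne') hlamto0
      (fun n => (le_add_of_nonneg_right (by positivity)).trans (hcoercive (fseq n))) hg₀
      (fun n => hmin n g₀)
  obtain ⟨φ, fstar, hφ, hweak⟩ := exists_subseq_tendsto_inner_of_bounded hbound
  have hstrong : Tendsto (fun k => ι (fseq (φ k))) atTop (𝓝 (ι fstar)) :=
    hιcpt.tendsto_of_tendsto_inner (fun k => hbound (φ k)) hweak
  refine ⟨φ, fstar, hφ, hFclosed.mem_of_tendsto_infDist ⟨_, hg₀⟩ hstrong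
    (hdist.comp hφ.tendsto_atTop), hweak, fun g hg => ?_⟩
  rw [hJ fstar]
  exact add_half_norm_sq_le_of_tendsto_inner ((hΦcont.tendsto _).comp hstrong) (hweak fstar)
    fun k => (hJ _).symm.trans_le (hJle g hg (φ k))

/-- Proposition 3.2: convergence of minimizers of the relaxed FSP objective. -/
theorem relaxed_objective_minimizers_converge
    {H B : Type*} [NormedAddCommGroup H] [InnerProductSpace ℝ H] [CompleteSpace H]
    [NormedAddCommGroup B] [NormedSpace ℝ B] [CompleteSpace B]
    (ι : H →L[ℝ] B) (hιinj : Function.Injective ι) (hιcpt : IsCompactOperator ι)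
    (F : Set B) (hFne : F.Nonempty) (hFclosed : IsClosed F)
    (hHB : ∀ S : Set B, S ⊆ F → IsClosed S → Bornology.IsBounded S → IsCompact S)
    (hinter : ∃ f : H, ι f ∈ F)
    (Φ : B → ℝ) (hΦcont : Continuous Φ)
    (J : H → ℝ) (hJ : ∀ f : H, J f = Φ (ι f) + (1 / 2) * ‖f‖ ^ 2)
    (K α : ℝ) (hα : 0 < α) (hcoercive : ∀ f : H, J f ≥ K + α * ‖f‖ ^ 2)
    (lam : ℕ → ℝ) (hlampos : ∀ n, 0 < lam n)
    (hlamto0 : Filter.Tendsto lam Filter.atTop (nhds 0))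
    (fseq : ℕ → H)
    (hmin : ∀ n, ∀ g : H,
      J (fseq n) + (1 / (2 * lam n ^ 2)) * (Metric.infDist (ι (fseq n)) F) ^ 2 ≤
        J g + (1 / (2 * lam n ^ 2)) * (Metric.infDist (ι g) F) ^ 2) :
    ∃ (φ : ℕ → ℕ) (fstar : H), StrictMono φ ∧ ι fstar ∈ F ∧
      (∀ g : H, Filter.Tendsto (fun k => (inner ℝ (fseq (φ k)) g : ℝ)) Filter.atTop
        (nhds (inner ℝ fstar g : ℝ))) ∧
      (∀ g : H, ι g ∈ F → J fstar ≤ J g) :=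
  relaxed_objective_minimizers_converge_general ι hιcpt F hFclosed hinter Φ hΦcont J hJ K α hα
    hcoercive lam hlampos hlamto0 fseq hmin
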